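/- arXiv:2401.08892 — 5 statements merged into one kernel-verified Lean document; each statement's English description precedes it below -/
import Mathlib

section
/- Let n ≥ 2, let T be a transition matrix whose sub-matrix T_p of transitions between performing grades is primitive, and let O be an origination vector (in particular o_n = 0). Then there exists a unique portfolio W_ttc satisfying the fixed-point equation W_ttcᵀ = W_ttcᵀ T I_w + (W_ttcᵀ T V_w) Oᵀ. Moreover, for every portfolio W_init, the iterates defined by W_0 = W_init and W_tᵀ = W_{t-1}ᵀ T I_w + (W_{t-1}ᵀ T V_w) Oᵀ converge to W_ttc as t → ∞. -/
open Matrix Filter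

/-- The write-off matrix `I_w`: diagonal with entries `(1, …, 1, 0)`. -/
noncomputable def writeOff (m : ℕ) : Matrix (Fin (m + 2)) (Fin (m + 2)) ℝ :=
  Matrix.diagonal fun i => if i = Fin.last (m + 1) then 0 else 1

/-- The vector `V_w = e_n` extracting the defaulted balance. -/
noncomputable def Vw (m : ℕ) : Fin (m + 2) → ℝ :=
  fun i => if i = Fin.last (m + 1) then 1 else 0

/-- The propagation map `F` with `F(W)ᵀ = Wᵀ T I_w + (Wᵀ T V_w) Oᵀ`. -/
noncomputable def propagate (m : ℕ) (T : Matrix (Fin (m + 2)) (Fin (m + 2)) ℝ)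
    (O : Fin (m + 2) → ℝ) (W : Fin (m + 2) → ℝ) : Fin (m + 2) → ℝ :=
  Matrix.vecMul W (T * writeOff m) + (Matrix.vecMul W T ⬝ᵥ Vw m) • O

/-- A square nonnegative real matrix is primitive if some power of it has all
entries strictly positive. -/
def Primitive {k : Type*} [Fintype k] [DecidableEq k] (A : Matrix k k ℝ) : Prop :=
  ∃ n, 1 ≤ n ∧ ∀ i j, 0 < (A ^ n) i j

namespace TTCaux
set_option linter.unusedSectionVars false
variable {n : Type*} [Fintype n] [DecidableEq n]


variable {n : Type*} [Fintype n] [DecidableEq n]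

/-- entries of powers of a nonneg matrix are nonneg -/
lemma pow_entry_nonneg {A : Matrix n n ℝ} (hA : ∀ i j, 0 ≤ A i j) (k : ℕ) :
    ∀ i j, 0 ≤ (A ^ k) i j := by
  induction k with
  | zero => intro i j; by_cases h : i = j <;> simp [pow_zero, Matrix.one_apply, h]
  | succ k ih =>
    intro i j
    rw [pow_succ, Matrix.mul_apply]
    exact Finset.sum_nonneg fun l _ => mul_nonneg (ih i l) (hA l j)

lemma pow_entry_le {A B : Matrix n n ℝ} (hA : ∀ i j, 0 ≤ A i j)
    (hAB : ∀ i j, A i j ≤ B i j) (k : ℕ) : ∀ i j, (A ^ k) i j ≤ (B ^ k) i j := by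
  induction k with
  | zero => intro i j; simp [pow_zero]
  | succ k ih =>
    intro i j
    rw [pow_succ, pow_succ, Matrix.mul_apply, Matrix.mul_apply]
    refine Finset.sum_le_sum fun l _ => ?_
    have h1 := pow_entry_nonneg hA k i l
    have h2 := hA l j
    exact mul_le_mul (ih i l) (hAB l j) h2 (le_trans h1 (ih i l))

/-- row sums of powers of a row-stochastic matrix -/
lemma pow_row_sum {A : Matrix n n ℝ} (hA : ∀ i, ∑ j, A i j = 1) (k : ℕ) :
    ∀ i, ∑ j, (A ^ k) i j = 1 := by
  induction k with
  | zero => intro i; simp [pow_zero, Matrix.one_apply]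
  | succ k ih =>
    intro i
    rw [pow_succ]
    simp only [Matrix.mul_apply]
    rw [Finset.sum_comm]
    calc ∑ l, ∑ j, (A ^ k) i l * A l j = ∑ l, (A ^ k) i l * ∑ j, A l j := by
          simp [Finset.mul_sum]
      _ = 1 := by simp only [hA, mul_one]; exact ih i

/-- ℓ¹ bound for vecMul against a nonnegative matrix -/
lemma vecMul_abs_le (B : Matrix n n ℝ) (hB : ∀ i j, 0 ≤ B i j) (v : n → ℝ) :
    ∑ j, |Matrix.vecMul v B j| ≤ ∑ i, |v i| * (∑ j, B i j) := by
  calc ∑ j, |Matrix.vecMul v B j| ≤ ∑ j, ∑ i, |v i| * B i j := by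
        refine Finset.sum_le_sum fun j _ => ?_
        refine le_trans (Finset.abs_sum_le_sum_abs _ _) ?_
        refine Finset.sum_le_sum fun i _ => ?_
        rw [abs_mul, abs_of_nonneg (hB i j)]
    _ = ∑ i, |v i| * (∑ j, B i j) := by rw [Finset.sum_comm]; simp [Finset.mul_sum]

lemma sum_vecMul (B : Matrix n n ℝ) (v : n → ℝ) :
    ∑ j, Matrix.vecMul v B j = ∑ i, v i * (∑ j, B i j) := by
  unfold Matrix.vecMul dotProduct
  rw [Finset.sum_comm]
  simp [Finset.mul_sum]



noncomputable def Mmat (m : ℕ) (T : Matrix (Fin (m + 2)) (Fin (m + 2)) ℝ)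
    (O : Fin (m + 2) → ℝ) : Matrix (Fin (m + 2)) (Fin (m + 2)) ℝ :=
  Matrix.of fun i j =>
    T i j * (if j = Fin.last (m + 1) then 0 else 1) + T i (Fin.last (m + 1)) * O j

lemma propagate_eq (m : ℕ) (T : Matrix (Fin (m + 2)) (Fin (m + 2)) ℝ)
    (O : Fin (m + 2) → ℝ) (W : Fin (m + 2) → ℝ) :
    propagate m T O W = Matrix.vecMul W (Mmat m T O) := by
  funext j
  have h1 : (Matrix.vecMul W T ⬝ᵥ Vw m) = ∑ i, W i * T i (Fin.last (m + 1)) := by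
    unfold Vw dotProduct
    simp only [mul_ite, mul_one, mul_zero]
    rw [Finset.sum_ite_eq' Finset.univ (Fin.last (m+1)) (fun j' => Matrix.vecMul W T j')]
    simp [Matrix.vecMul, dotProduct]
  simp only [propagate, Pi.add_apply, Pi.smul_apply, smul_eq_mul, h1]
  unfold Mmat Matrix.vecMul dotProduct
  simp only [Matrix.mul_diagonal, writeOff, Matrix.of_apply, mul_add]
  rw [Finset.sum_add_distrib]
  congr 1
  rw [Finset.sum_mul]
  refine Finset.sum_congr rfl fun i _ => ?_; ring

/-- the submatrix of a power dominates the power of the submatrix -/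
lemma submatrix_pow_le (m : ℕ) (M : Matrix (Fin (m + 2)) (Fin (m + 2)) ℝ)
    (hM : ∀ i j, 0 ≤ M i j) (k : ℕ) :
    ∀ i j, ((M.submatrix Fin.castSucc Fin.castSucc) ^ k) i j ≤
      (M ^ k) i.castSucc j.castSucc := by
  induction k with
  | zero =>
    intro i j
    by_cases h : i = j
    · subst h; simp [pow_zero, Matrix.one_apply]
    · simp [pow_zero, Matrix.one_apply, h, fun hc => h (Fin.castSucc_injective _ hc)]
  | succ k ih =>
    intro i j
    rw [pow_succ, pow_succ, Matrix.mul_apply, Matrix.mul_apply]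
    have hNnn : ∀ i j, 0 ≤ (M.submatrix Fin.castSucc Fin.castSucc) i j := fun i j => hM _ _
    rw [Fin.sum_univ_castSucc (n := m + 1)
      (f := fun l => (M ^ k) i.castSucc l * M l j.castSucc)]
    have hmain : ∑ l : Fin (m+1), ((M.submatrix Fin.castSucc Fin.castSucc) ^ k) i l *
        (M.submatrix Fin.castSucc Fin.castSucc) l j ≤
        ∑ l : Fin (m+1), (M ^ k) i.castSucc l.castSucc * M l.castSucc j.castSucc := by
      refine Finset.sum_le_sum fun l _ => ?_
      exact mul_le_mul (ih i l) (le_refl _) (hM _ _)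
        (le_trans (pow_entry_nonneg hNnn k i l) (ih i l))
    refine le_trans hmain ?_
    have : 0 ≤ (M ^ k) i.castSucc (Fin.last (m+1)) * M (Fin.last (m+1)) j.castSucc :=
      mul_nonneg (pow_entry_nonneg hM k _ _) (hM _ _)
    linarith

end TTCaux

/-- **Theorem 1 (existence and uniqueness of the TTC portfolio).**
If the sub-matrix of transitions between performing rating grades is primitive and there is
no origination into the default class, then there exists a unique portfolio `W_ttc` with
`W_ttcᵀ = W_ttcᵀ T I_w + (W_ttcᵀ T V_w) Oᵀ`, and the iterative algorithm converges to it
from an arbitrary initial portfolio. -/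
theorem ttc_portfolio_exists_unique (m : ℕ)
    (T : Matrix (Fin (m + 2)) (Fin (m + 2)) ℝ)
    (hT_nonneg : ∀ i j, 0 ≤ T i j)
    (hT_rows : ∀ i, ∑ j, T i j = 1)
    (hT_absorbing : ∀ j, T (Fin.last (m + 1)) j = if j = Fin.last (m + 1) then 1 else 0)
    (hT_primitive : Primitive (T.submatrix (Fin.castSucc) (Fin.castSucc)))
    (O : Fin (m + 2) → ℝ)
    (hO_nonneg : ∀ i, 0 ≤ O i)
    (hO_sum : ∑ i, O i = 1)
    (hO_last : O (Fin.last (m + 1)) = 0) :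
    ∃ Wttc : Fin (m + 2) → ℝ,
      ((∀ i, 0 ≤ Wttc i) ∧ ∑ i, Wttc i = 1) ∧
      propagate m T O Wttc = Wttc ∧
      (∀ W : Fin (m + 2) → ℝ, ((∀ i, 0 ≤ W i) ∧ ∑ i, W i = 1) →
        propagate m T O W = W → W = Wttc) ∧
      (∀ Winit : Fin (m + 2) → ℝ, ((∀ i, 0 ≤ Winit i) ∧ ∑ i, Winit i = 1) →
        Filter.Tendsto (fun t => (propagate m T O)^[t] Winit) Filter.atTop (nhds Wttc)) := by
  classical
  set M := TTCaux.Mmat m T O with hMdef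
  have hprop : ∀ W, propagate m T O W = Matrix.vecMul W M :=
    fun W => TTCaux.propagate_eq m T O W
  -- basic properties of M
  have hMnn : ∀ i j, 0 ≤ M i j := by
    intro i j
    simp only [hMdef, TTCaux.Mmat, Matrix.of_apply]
    by_cases h : j = Fin.last (m+1)
    · rw [if_pos (by rw [h])]
      rw [mul_zero, zero_add]
      exact mul_nonneg (hT_nonneg _ _) (hO_nonneg _)
    · rw [if_neg (by rw [show Fin.last (m+1) = Fin.last (m+1) from rfl]; exact h), mul_one]
      exact add_nonneg (hT_nonneg _ _) (mul_nonneg (hT_nonneg _ _) (hO_nonneg _))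
  have hMrow : ∀ i, ∑ j, M i j = 1 := by
    intro i
    simp only [hMdef, TTCaux.Mmat, Matrix.of_apply]
    rw [Finset.sum_add_distrib, ← Finset.mul_sum, hO_sum, mul_one]
    have h1 : ∑ j, T i j * (if j = Fin.last (m+1) then 0 else 1)
        = ∑ j, (T i j - if j = Fin.last (m+1) then T i j else 0) := by
      refine Finset.sum_congr rfl fun j _ => ?_
      by_cases h : j = Fin.last (m+1) <;> simp [h]
    rw [h1, Finset.sum_sub_distrib, hT_rows i,
      Finset.sum_ite_eq' Finset.univ (Fin.last (m+1)) (fun j => T i j)]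
    simp
  have hMlast : ∀ i, M i (Fin.last (m+1)) = 0 := by
    intro i
    simp [hMdef, TTCaux.Mmat, hO_last]
  -- primitivity transfer
  obtain ⟨k, hk1, hkpos⟩ := hT_primitive
  have hTpnn : ∀ i j, 0 ≤ (T.submatrix Fin.castSucc Fin.castSucc) i j :=
    fun i j => hT_nonneg _ _
  have hTpleN : ∀ i j, (T.submatrix Fin.castSucc Fin.castSucc) i j ≤
      (M.submatrix Fin.castSucc Fin.castSucc) i j := by
    intro i j
    have hne : (Fin.castSucc j) ≠ Fin.last (m+1) := Fin.ne_of_lt (Fin.castSucc_lt_last j)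
    simp only [hMdef, TTCaux.Mmat, Matrix.submatrix_apply, Matrix.of_apply, if_neg hne, mul_one]
    have := mul_nonneg (hT_nonneg i.castSucc (Fin.last _)) (hO_nonneg j.castSucc)
    linarith
  have hNpos : ∀ i j, 0 < ((M.submatrix Fin.castSucc Fin.castSucc) ^ k) i j :=
    fun i j => lt_of_lt_of_le (hkpos i j) (TTCaux.pow_entry_le hTpnn hTpleN k i j)
  -- the minimal entry δ
  obtain ⟨p0, -, hp0⟩ := Finset.exists_min_image (Finset.univ : Finset (Fin (m+1) × Fin (m+1)))
      (fun p => ((M.submatrix Fin.castSucc Fin.castSucc) ^ k) p.1 p.2) ⟨(0,0), Finset.mem_univ _⟩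
  set δ := ((M.submatrix Fin.castSucc Fin.castSucc) ^ k) p0.1 p0.2 with hδdef
  have hδpos : 0 < δ := hNpos _ _
  have hδle : ∀ i j, δ ≤ ((M.submatrix Fin.castSucc Fin.castSucc) ^ k) i j :=
    fun i j => hp0 (i, j) (Finset.mem_univ _)
  -- the K-step matrix A
  set K := k + 1 with hKdef
  set A := M ^ K with hAdef
  have hAnn : ∀ i j, 0 ≤ A i j := TTCaux.pow_entry_nonneg hMnn K
  have hArow : ∀ i, ∑ j, A i j = 1 := TTCaux.pow_row_sum hMrow K
  have hAlast : ∀ i, A i (Fin.last (m+1)) = 0 := by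
    intro i
    rw [hAdef, hKdef, pow_succ, Matrix.mul_apply]
    exact Finset.sum_eq_zero fun l _ => by rw [hMlast l, mul_zero]
  have hMperf : ∀ i, ∑ l : Fin (m+1), M i l.castSucc = 1 := by
    intro i
    have h := hMrow i
    rw [Fin.sum_univ_castSucc] at h
    rw [hMlast i, add_zero] at h
    exact h
  have hAδ : ∀ i (j : Fin (m+1)), δ ≤ A i j.castSucc := by
    intro i j
    have hMk : ∀ l : Fin (m+1), δ ≤ (M ^ k) l.castSucc j.castSucc :=
      fun l => le_trans (hδle l j) (TTCaux.submatrix_pow_le m M hMnn k l j)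
    rw [hAdef, hKdef, pow_succ', Matrix.mul_apply]
    rw [Fin.sum_univ_castSucc (f := fun l => M i l * (M ^ k) l j.castSucc)]
    rw [show M i (Fin.last (m+1)) * (M ^ k) (Fin.last (m+1)) j.castSucc = 0 by
      rw [hMlast i, zero_mul]]
    rw [add_zero]
    calc δ = δ * ∑ l : Fin (m+1), M i l.castSucc := by rw [hMperf i, mul_one]
      _ = ∑ l : Fin (m+1), δ * M i l.castSucc := Finset.mul_sum _ _ _
      _ ≤ ∑ l : Fin (m+1), M i l.castSucc * (M ^ k) l.castSucc j.castSucc := by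
          refine Finset.sum_le_sum fun l _ => ?_
          rw [mul_comm δ]
          exact mul_le_mul_of_nonneg_left (hMk l) (hMnn i _)
  -- the contraction constant
  set c := 1 - (m + 1 : ℝ) * δ with hcdef
  have hcard : ((Finset.univ : Finset (Fin (m+1))).card : ℝ) = (m+1 : ℝ) := by
    simp
  have hc0 : 0 ≤ c := by
    have h := hArow 0
    rw [Fin.sum_univ_castSucc, hAlast 0, add_zero] at h
    have hle : ∑ _l : Fin (m+1), δ ≤ ∑ l : Fin (m+1), A 0 l.castSucc :=
      Finset.sum_le_sum fun l _ => hAδ 0 l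
    rw [Finset.sum_const, nsmul_eq_mul] at hle
    simp only [Finset.card_univ, Fintype.card_fin] at hle
    rw [hcdef]
    rw [h] at hle
    push_cast at hle ⊢
    linarith
  have hc1 : c < 1 := by
    rw [hcdef]
    have : (0 : ℝ) < (m + 1 : ℝ) * δ := by positivity
    linarith
  -- the shifted matrix B with row sums c
  set B : Matrix (Fin (m+2)) (Fin (m+2)) ℝ :=
    Matrix.of (fun i j => A i j - (if j = Fin.last (m+1) then 0 else δ)) with hBdef
  have hBnn : ∀ i j, 0 ≤ B i j := by
    intro i j
    by_cases h : j = Fin.last (m+1)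
    · simp [hBdef, h, hAlast i, hAnn]
    · have hj : j ≠ Fin.last (m+1) := h
      obtain ⟨j', rfl⟩ := (Fin.exists_castSucc_eq (i := j)).mpr hj
      simp only [hBdef, Matrix.of_apply, if_neg h]
      linarith [hAδ i j']
  have hBrow : ∀ i, ∑ j, B i j = c := by
    intro i
    simp only [hBdef, Matrix.of_apply]
    rw [Finset.sum_sub_distrib, hArow i]
    have h2 : ∑ j : Fin (m+2), (if j = Fin.last (m+1) then (0:ℝ) else δ)
        = ∑ j : Fin (m+2), (δ - if j = Fin.last (m+1) then δ else 0) := by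
      refine Finset.sum_congr rfl fun j _ => ?_
      by_cases h : j = Fin.last (m+1) <;> simp [h]
    rw [h2, Finset.sum_sub_distrib, Finset.sum_const,
      Finset.sum_ite_eq' Finset.univ (Fin.last (m+1)) (fun _ => δ)]
    simp only [Finset.mem_univ, if_pos, nsmul_eq_mul, Finset.card_univ, Fintype.card_fin]
    rw [hcdef]
    push_cast
    ring
  -- contraction estimate for A on sum-zero vectors
  have hvA : ∀ v : Fin (m+2) → ℝ, ∑ i, v i = 0 → Matrix.vecMul v A = Matrix.vecMul v B := by
    intro v hv
    funext j
    unfold Matrix.vecMul dotProduct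
    simp only [hBdef, Matrix.of_apply, mul_sub]
    rw [Finset.sum_sub_distrib, ← Finset.sum_mul, hv, zero_mul, sub_zero]
  have hcontr : ∀ v : Fin (m+2) → ℝ, ∑ i, v i = 0 →
      ∑ j, |Matrix.vecMul v A j| ≤ c * ∑ i, |v i| := by
    intro v hv
    rw [hvA v hv]
    refine le_trans (TTCaux.vecMul_abs_le B hBnn v) ?_
    simp only [hBrow]
    rw [← Finset.sum_mul]
    ring_nf
    exact le_refl _
  have hnonexp : ∀ v : Fin (m+2) → ℝ, ∑ j, |Matrix.vecMul v M j| ≤ ∑ i, |v i| := by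
    intro v
    refine le_trans (TTCaux.vecMul_abs_le M hMnn v) ?_
    simp [hMrow]
  -- the propagation map
  set G := propagate m T O with hGdef
  set D : (Fin (m+2) → ℝ) → (Fin (m+2) → ℝ) → ℝ := fun x y => ∑ i, |x i - y i| with hDdef
  have hD0 : ∀ x y, 0 ≤ D x y := fun x y => Finset.sum_nonneg fun i _ => abs_nonneg _
  have hDcoord : ∀ x y i, |x i - y i| ≤ D x y := by
    intro x y i
    exact Finset.single_le_sum (f := fun i => |x i - y i|) (fun i _ => abs_nonneg _)
      (Finset.mem_univ i)
  have hDeq : ∀ x y, D x y = 0 → x = y := by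
    intro x y h
    funext i
    have := (Finset.sum_eq_zero_iff_of_nonneg (fun i _ => abs_nonneg (x i - y i))).mp h i
      (Finset.mem_univ i)
    have := abs_eq_zero.mp this
    linarith
  have hGsum : ∀ x, ∑ j, G x j = ∑ i, x i := by
    intro x
    rw [hprop, TTCaux.sum_vecMul]
    simp [hMrow]
  have hGnn : ∀ x, (∀ i, 0 ≤ x i) → ∀ j, 0 ≤ G x j := by
    intro x hx j
    rw [hprop]
    exact Finset.sum_nonneg (s := Finset.univ) fun i _ => mul_nonneg (hx i) (hMnn i j)
  have hGdiff : ∀ x y, (fun j => G x j - G y j) = Matrix.vecMul (x - y) M := by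
    intro x y
    rw [hprop, hprop, Matrix.sub_vecMul]
    rfl
  have hGnonexp : ∀ x y, D (G x) (G y) ≤ D x y := by
    intro x y
    have h := hnonexp (x - y)
    calc D (G x) (G y) = ∑ j, |Matrix.vecMul (x - y) M j| := by
          rw [hDdef]
          refine Finset.sum_congr rfl fun j _ => ?_
          rw [← hGdiff x y]
      _ ≤ ∑ i, |(x - y) i| := h
      _ = D x y := by rw [hDdef]; exact Finset.sum_congr rfl fun i _ => by simp
  have hiter : ∀ (t : ℕ) x, G^[t] x = Matrix.vecMul x (M ^ t) := by
    intro t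
    induction t with
    | zero => intro x; simp [Matrix.vecMul_one]
    | succ t ih =>
      intro x
      rw [Function.iterate_succ_apply', ih, hprop, Matrix.vecMul_vecMul, ← pow_succ]
  have hItSum : ∀ (t : ℕ) x, ∑ j, (G^[t] x) j = ∑ i, x i := by
    intro t
    induction t with
    | zero => intro x; rfl
    | succ t ih =>
      intro x
      rw [Function.iterate_succ_apply', hGsum, ih]
  have hItNn : ∀ (t : ℕ) x, (∀ i, 0 ≤ x i) → ∀ j, 0 ≤ (G^[t] x) j := by
    intro t
    induction t with
    | zero => intro x hx; exact hx
    | succ t ih =>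
      intro x hx
      rw [Function.iterate_succ_apply']
      exact hGnn _ (ih x hx)
  have hHcontr : ∀ x y, ∑ i, x i = ∑ i, y i → D (G^[K] x) (G^[K] y) ≤ c * D x y := by
    intro x y hxy
    have hsz : ∑ i, (x - y) i = 0 := by
      simp only [Pi.sub_apply]
      rw [Finset.sum_sub_distrib, hxy, sub_self]
    have h := hcontr (x - y) hsz
    have hfe : ∀ j, G^[K] x j - G^[K] y j = Matrix.vecMul (x - y) A j := by
      intro j
      rw [hiter, hiter, ← hAdef, Matrix.sub_vecMul]
      rfl
    calc D (G^[K] x) (G^[K] y) = ∑ j, |Matrix.vecMul (x - y) A j| := by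
          simp only [hDdef]
          exact Finset.sum_congr rfl fun j _ => by rw [hfe j]
      _ ≤ c * ∑ i, |(x - y) i| := h
      _ = c * D x y := by rw [hDdef]; congr 1
  -- the Cauchy sequence of K-step iterates starting at O
  set b : ℕ → (Fin (m+2) → ℝ) := fun q => G^[K * q] O with hbdef
  have hbsum : ∀ q, ∑ i, b q i = 1 := fun q => by rw [hbdef]; rw [hItSum]; exact hO_sum
  have hbnn : ∀ q i, 0 ≤ b q i := fun q i => hItNn _ _ hO_nonneg i
  have hbstep : ∀ q, b (q + 1) = G^[K] (b q) := by
    intro q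
    rw [hbdef]
    show G^[K * (q+1)] O = G^[K] (G^[K * q] O)
    rw [show K * (q + 1) = K + K * q by ring, Function.iterate_add_apply]
  have hgeo : ∀ q, D (b q) (b (q + 1)) ≤ c ^ q * D (b 0) (b 1) := by
    intro q
    induction q with
    | zero => simp
    | succ q ih =>
      have h1 : D (b (q+1)) (b (q+2)) ≤ c * D (b q) (b (q+1)) := by
        have h := hHcontr (b q) (b (q+1)) (by rw [hbsum, hbsum])
        rw [← hbstep q, ← hbstep (q+1)] at h
        exact h
      calc D (b (q+1)) (b (q+2)) ≤ c * D (b q) (b (q+1)) := h1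
        _ ≤ c * (c ^ q * D (b 0) (b 1)) := by
            exact mul_le_mul_of_nonneg_left ih hc0
        _ = c ^ (q+1) * D (b 0) (b 1) := by ring
  have hcauchy : CauchySeq b := by
    refine cauchySeq_of_le_geometric c (D (b 0) (b 1)) hc1 fun q => ?_
    have hb : (0:ℝ) ≤ D (b 0) (b 1) * c ^ q := mul_nonneg (hD0 _ _) (pow_nonneg hc0 q)
    rw [dist_pi_le_iff hb]
    intro i
    rw [Real.dist_eq]
    calc |b q i - b (q+1) i| ≤ D (b q) (b (q+1)) := hDcoord _ _ i
      _ ≤ c ^ q * D (b 0) (b 1) := hgeo q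
      _ = D (b 0) (b 1) * c ^ q := by ring
  obtain ⟨p, hp⟩ := cauchySeq_tendsto_of_complete hcauchy
  have hpi : ∀ i, Tendsto (fun q => b q i) atTop (nhds (p i)) := fun i =>
    (tendsto_pi_nhds.mp hp) i
  have hpsum : ∑ i, p i = 1 := by
    have h1 : Tendsto (fun q => ∑ i, b q i) atTop (nhds (∑ i, p i)) :=
      tendsto_finset_sum _ fun i _ => hpi i
    have h2 : Tendsto (fun _ : ℕ => (1:ℝ)) atTop (nhds 1) := tendsto_const_nhds
    have := tendsto_nhds_unique (by simpa [hbsum] using h1) h2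
    exact this
  have hpnn : ∀ i, 0 ≤ p i := fun i => ge_of_tendsto' (hpi i) (fun q => hbnn q i)
  -- p is a fixed point of A
  have hpA : Matrix.vecMul p A = p := by
    funext j
    have h1 : Tendsto (fun q => b (q+1) j) atTop (nhds (p j)) :=
      (hpi j).comp (tendsto_add_atTop_nat 1)
    have h2 : Tendsto (fun q => Matrix.vecMul (b q) A j) atTop
        (nhds (Matrix.vecMul p A j)) := by
      unfold Matrix.vecMul dotProduct
      exact tendsto_finset_sum _ fun i _ => (hpi i).mul_const (A i j)
    have h3 : (fun q => b (q+1) j) = fun q => Matrix.vecMul (b q) A j := by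
      funext q
      rw [hbstep q, hiter, ← hAdef]
    rw [h3] at h1
    exact tendsto_nhds_unique h2 h1
  -- uniqueness of sum-one fixed points of A
  have huniq : ∀ x y : Fin (m+2) → ℝ, Matrix.vecMul x A = x → Matrix.vecMul y A = y →
      ∑ i, x i = 1 → ∑ i, y i = 1 → x = y := by
    intro x y hx hy hxs hys
    have hsz : ∑ i, (x - y) i = 0 := by
      simp only [Pi.sub_apply]
      rw [Finset.sum_sub_distrib, hxs, hys, sub_self]
    have h := hcontr (x - y) hsz
    have hxy : Matrix.vecMul (x - y) A = x - y := by
      rw [Matrix.sub_vecMul, hx, hy]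
    rw [hxy] at h
    have hD : D x y ≤ c * D x y := by
      calc D x y = ∑ i, |(x - y) i| := Finset.sum_congr rfl fun i _ => by simp
        _ ≤ c * ∑ i, |(x - y) i| := h
        _ = c * D x y := by congr 1
    have : D x y = 0 := by nlinarith [hD0 x y]
    exact hDeq x y this
  -- p is a fixed point of G
  have hpG : G p = p := by
    have hGpA : Matrix.vecMul (G p) A = G p := by
      rw [hprop, Matrix.vecMul_vecMul, hAdef, ← pow_succ', pow_succ,
        ← Matrix.vecMul_vecMul, ← hAdef, hpA]
    have hGps : ∑ i, G p i = 1 := by rw [hGsum, hpsum]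
    exact huniq (G p) p hGpA hpA hGps hpsum
  have hpGfix : ∀ t, G^[t] p = p := fun t => Function.IsFixedPt.iterate hpG t
  -- the geometric convergence bound
  have hbound : ∀ (x : Fin (m+2) → ℝ), ∑ i, x i = 1 →
      ∀ t, D (G^[t] x) p ≤ c ^ (t / K) * D x p := by
    intro x hxs t
    have hstepA : ∀ q, D (G^[K * q] x) p ≤ c ^ q * D x p := by
      intro q
      induction q with
      | zero => simp
      | succ q ih =>
        have heq : G^[K * (q+1)] x = G^[K] (G^[K * q] x) := by
          rw [show K * (q + 1) = K + K * q by ring, Function.iterate_add_apply]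
        have hsq : ∑ i, (G^[K * q] x) i = ∑ i, p i := by rw [hItSum, hxs, hpsum]
        calc D (G^[K * (q+1)] x) p = D (G^[K] (G^[K * q] x)) (G^[K] p) := by
              rw [heq, hpGfix K]
          _ ≤ c * D (G^[K * q] x) p := hHcontr _ _ hsq
          _ ≤ c * (c ^ q * D x p) := mul_le_mul_of_nonneg_left ih hc0
          _ = c ^ (q+1) * D x p := by ring
    have hstepB : ∀ r y, D (G^[r] y) p ≤ D y p := by
      intro r
      induction r with
      | zero => intro y; exact le_refl _
      | succ r ih =>
        intro y
        rw [Function.iterate_succ_apply']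
        calc D (G (G^[r] y)) p = D (G (G^[r] y)) (G p) := by rw [hpG]
          _ ≤ D (G^[r] y) p := hGnonexp _ _
          _ ≤ D y p := ih y
    have hdecomp : G^[t] x = G^[t % K] (G^[K * (t / K)] x) := by
      rw [← Function.iterate_add_apply, Nat.mod_add_div t K]
    calc D (G^[t] x) p = D (G^[t % K] (G^[K * (t / K)] x)) p := by rw [hdecomp]
      _ ≤ D (G^[K * (t / K)] x) p := hstepB _ _
      _ ≤ c ^ (t / K) * D x p := hstepA _
  -- assemble the result
  refine ⟨p, ⟨hpnn, hpsum⟩, ?_, ?_, ?_⟩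
  · exact hpG
  · intro W ⟨hWnn, hWsum⟩ hWfix
    have hWG : G W = W := hWfix
    have hWA : Matrix.vecMul W A = W := by
      have h := hiter K W
      rw [Function.IsFixedPt.iterate hWG K] at h
      rw [← hAdef] at h
      exact h.symm
    exact huniq W p hWA hpA hWsum hpsum
  · intro Winit ⟨hWnn, hWsum⟩
    have hKpos : 0 < K := by omega
    have hdiv : Tendsto (fun t : ℕ => t / K) atTop atTop := by
      rw [Filter.tendsto_atTop_atTop]
      intro bnd
      exact ⟨bnd * K, fun a ha => (Nat.le_div_iff_mul_le hKpos).mpr ha⟩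
    have hgeo0 : Tendsto (fun t : ℕ => c ^ (t / K) * D Winit p) atTop (nhds 0) := by
      have h1 : Tendsto (fun t : ℕ => c ^ (t / K)) atTop (nhds 0) :=
        (tendsto_pow_atTop_nhds_zero_of_lt_one hc0 hc1).comp hdiv
      simpa using h1.mul_const (D Winit p)
    rw [tendsto_iff_dist_tendsto_zero]
    refine squeeze_zero (fun t => dist_nonneg) (fun t => ?_) hgeo0
    have hb : (0:ℝ) ≤ c ^ (t / K) * D Winit p :=
      mul_nonneg (pow_nonneg hc0 _) (hD0 _ _)
    rw [dist_pi_le_iff hb]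
    intro i
    rw [Real.dist_eq]
    calc |(G^[t] Winit) i - p i| ≤ D (G^[t] Winit) p := hDcoord _ _ i
      _ ≤ c ^ (t / K) * D Winit p := hbound Winit hWsum t
end

section
/- Let n ≥ 2, let T be a transition matrix and O an origination vector. A portfolio W satisfies the fixed-point equation Wᵀ = Wᵀ T I_w + (Wᵀ T V_w) Oᵀ if and only if its last component w_n is zero and its truncation W_p = (w_1,…,w_{n−1}) ∈ ℝ^{n−1} satisfies M_p W_p = W_p, where M_p is the (n−1)×(n−1) matrix with entries (M_p)_{i,j} = p_{j,i} + o_i p_{j,n}. In particular, the fixed portfolios of the propagation map correspond exactly to the nonnegative eigenvectors of M_p with eigenvalue 1 whose entries sum to 1, extended by a zero in the last coordinate. -/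
open Matrix

/-- The reduced `(n-1) × (n-1)` matrix `M_p` with `(M_p)_{i,j} = p_{j,i} + o_i p_{j,n}`. -/
noncomputable def Mp (m : ℕ) (T : Matrix (Fin (m + 2)) (Fin (m + 2)) ℝ)
    (O : Fin (m + 2) → ℝ) : Matrix (Fin (m + 1)) (Fin (m + 1)) ℝ :=
  Matrix.of fun i j =>
    T j.castSucc i.castSucc + O i.castSucc * T j.castSucc (Fin.last (m + 1))

/-- A portfolio `W` is a fixed point of the propagation map if and only if its last
component is zero and its truncation to the performing grades is a fixed point of the
reduced matrix `M_p`; i.e. the fixed portfolios correspond exactly to the nonnegative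
eigenvectors of `M_p` for the eigenvalue `1` whose entries sum to one, extended by a zero
in the last coordinate. -/
theorem propagate_fixed_iff_Mp_eigenvector (m : ℕ)
    (T : Matrix (Fin (m + 2)) (Fin (m + 2)) ℝ)
    (hT_nonneg : ∀ i j, 0 ≤ T i j)
    (hT_rows : ∀ i, ∑ j, T i j = 1)
    (hT_absorbing : ∀ j, T (Fin.last (m + 1)) j = if j = Fin.last (m + 1) then 1 else 0)
    (O : Fin (m + 2) → ℝ)
    (hO_nonneg : ∀ i, 0 ≤ O i)
    (hO_sum : ∑ i, O i = 1)
    (hO_last : O (Fin.last (m + 1)) = 0)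
    (W : Fin (m + 2) → ℝ)
    (hW_nonneg : ∀ i, 0 ≤ W i)
    (hW_sum : ∑ i, W i = 1) :
    propagate m T O W = W ↔
      (W (Fin.last (m + 1)) = 0 ∧
        (Mp m T O).mulVec (fun i => W i.castSucc) = fun i => W i.castSucc) := by
  classical
  have hProp : ∀ k, propagate m T O W k =
      (∑ j, W j * T j k) * (if k = Fin.last (m + 1) then (0:ℝ) else 1)
        + (∑ j, W j * T j (Fin.last (m + 1))) * O k := by
    intro k
    simp only [propagate, Pi.add_apply, Pi.smul_apply, smul_eq_mul]
    congr 1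
    · simp only [Matrix.vecMul, dotProduct, writeOff, Matrix.mul_diagonal,
        Finset.sum_mul, mul_assoc]
    · congr 1
      simp [Matrix.vecMul, dotProduct, Vw, Finset.sum_ite_eq']
  constructor
  · intro h
    have hlast : W (Fin.last (m + 1)) = 0 := by
      have := congrFun h (Fin.last (m + 1))
      rw [hProp] at this
      simp [hO_last] at this
      exact this.symm
    refine ⟨hlast, ?_⟩
    funext i
    have hi : (i.castSucc : Fin (m + 2)) ≠ Fin.last (m + 1) := (Fin.castSucc_lt_last i).ne
    have := congrFun h i.castSucc
    rw [hProp] at this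
    rw [if_neg hi, mul_one] at this
    have hS : ∀ k, (∑ j, W j * T j k) = ∑ j : Fin (m + 1), W j.castSucc * T j.castSucc k := by
      intro k
      rw [Fin.sum_univ_castSucc]
      simp [hlast]
    rw [hS, hS] at this
    simp only [Matrix.mulVec, dotProduct, Mp, Matrix.of_apply]
    rw [← this, Finset.sum_mul, ← Finset.sum_add_distrib]
    apply Finset.sum_congr rfl
    intro j _
    ring
  · rintro ⟨hlast, hMp⟩
    funext k
    rw [hProp]
    have hS : ∀ k, (∑ j, W j * T j k) = ∑ j : Fin (m + 1), W j.castSucc * T j.castSucc k := by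
      intro k
      rw [Fin.sum_univ_castSucc]
      simp [hlast]
    rcases Fin.eq_castSucc_or_eq_last k with ⟨i, rfl⟩ | rfl
    · have hi : (i.castSucc : Fin (m + 2)) ≠ Fin.last (m + 1) := (Fin.castSucc_lt_last i).ne
      rw [if_neg hi, mul_one, hS, hS]
      have := congrFun hMp i
      simp only [Matrix.mulVec, dotProduct, Mp, Matrix.of_apply] at this
      rw [← this, Finset.sum_mul, ← Finset.sum_add_distrib]
      apply Finset.sum_congr rfl
      intro j _
      ring
    · simp [hO_last, hlast]
end

section
/- Let A be an m×m real matrix with nonnegative entries. Then every eigenvalue λ ∈ ℂ of A satisfies |λ| ≤ max_j Σ_{i=1}^m a_{i,j}, and there exists a real eigenvalue λ of A with λ ≥ min_j Σ_{i=1}^m a_{i,j}; that is, the spectral radius of A lies between the minimum and the maximum of the column sums of A. -/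
/-!
The bound on `|λ|` is Gershgorin's theorem for `Aᵀ`. For the real eigenvalue let `B = Aᵀ` and
`c` its minimal row sum, and suppose `B` had no real eigenvalue `t ≥ c`. Then the resolvent
`R t = (t - B)⁻¹` is defined and continuous on `[c, ∞)`. A discrete maximum principle (if `X ≥ 0`
has row sums `< 1` and `X * Y ≤ Y` entrywise, then `Y ≥ 0`) shows that `R t ≥ 0` for `t` above
every row sum and, through the resolvent identity `R s - R x = (x - s) • R x * R s`, that
nonnegativity of `R x` persists slightly below `x`. By continuous induction `R c ≥ 0`; but
`(c - B) 𝟙 ≤ 0`, so `𝟙 = R c ((c - B) 𝟙) ≤ 0`.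
-/

namespace spectrum
variable {R A : Type*} [CommRing R] [Ring A] [Algebra R A]

theorem resolvent_sub_resolvent_eq_smul_mul {a : A} {r s : R} (hr : r ∈ resolventSet R a)
    (hs : s ∈ resolventSet R a) :
    resolvent a s - resolvent a r = (r - s) • (resolvent a r * resolvent a s) := by
  have hr' := mem_resolventSet_iff.mp hr
  have hs' := mem_resolventSet_iff.mp hs
  calc resolvent a s - resolvent a r
      = resolvent a r * ((algebraMap R A r - a) - (algebraMap R A s - a)) * resolvent a s := by
        rw [mul_sub, sub_mul, resolvent, resolvent, Ring.inverse_mul_cancel _ hr', one_mul,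
          mul_assoc, Ring.mul_inverse_cancel _ hs', mul_one]
    _ = (r - s) • (resolvent a r * resolvent a s) := by
        rw [sub_sub_sub_cancel_right, ← map_sub, Algebra.algebraMap_eq_smul_one, mul_smul_comm,
          mul_one, smul_mul_assoc]

end spectrum

namespace Matrix
variable {n : Type*} [Fintype n] [DecidableEq n]

theorem spectrum_transpose {R : Type*} [CommRing R] (A : Matrix n n R) :
    spectrum R Aᵀ = spectrum R A := by
  ext r
  rw [spectrum.mem_iff, spectrum.mem_iff, ← isUnit_transpose, transpose_sub, transpose_transpose,
    algebraMap_eq_diagonal, diagonal_transpose]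

theorem exists_norm_le_sum_norm_row_of_mem_spectrum {K : Type*} [NormedField K]
    {A : Matrix n n K} {μ : K} (hμ : μ ∈ spectrum K A) : ∃ k, ‖μ‖ ≤ ∑ j, ‖A k j‖ := by
  rw [← spectrum_toLin', ← Module.End.hasEigenvalue_iff_mem_spectrum] at hμ
  obtain ⟨k, hk⟩ := eigenvalue_mem_ball hμ
  refine ⟨k, ?_⟩
  rw [← Finset.add_sum_erase _ _ (Finset.mem_univ k)]
  calc ‖μ‖ ≤ ‖A k k‖ + ‖μ - A k k‖ := norm_le_norm_add_norm_sub' μ (A k k)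
    _ ≤ _ := by gcongr; exact mem_closedBall_iff_norm.mp hk

omit [DecidableEq n] in
theorem nonneg_of_mul_le_self {R : Type*} [CommRing R] [LinearOrder R] [IsStrictOrderedRing R]
    {X Y : Matrix n n R} (hX : ∀ i j, 0 ≤ X i j) (hX_row : ∀ i, ∑ j, X i j < 1)
    (hXY : ∀ i j, (X * Y) i j ≤ Y i j) (i j : n) : 0 ≤ Y i j := by
  obtain ⟨k, -, hk⟩ := Finset.exists_min_image Finset.univ (fun k => Y k j) ⟨i, Finset.mem_univ i⟩
  by_contra! hneg
  have hYk : Y k j < 0 := (hk i (Finset.mem_univ i)).trans_lt hneg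
  have : Y k j < (X * Y) k j := calc
    Y k j < (∑ l, X k l) * Y k j := by nlinarith [hX_row k]
    _ = ∑ l, X k l * Y k j := Finset.sum_mul _ _ _
    _ ≤ ∑ l, X k l * Y l j :=
      Finset.sum_le_sum fun l _ => mul_le_mul_of_nonneg_left (hk l (Finset.mem_univ l)) (hX k l)
    _ = (X * Y) k j := (mul_apply ..).symm
  exact (hXY k j).not_gt this

theorem continuousAt_resolvent {K : Type*} [Field K] [TopologicalSpace K] [IsTopologicalRing K]
    [ContinuousInv₀ K] {B : Matrix n n K} {t : K} (ht : t ∈ resolventSet K B) :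
    ContinuousAt (resolvent B) t := by
  have hdet : (algebraMap K _ t - B).det ≠ 0 :=
    ((isUnit_iff_isUnit_det _).mp (spectrum.mem_resolventSet_iff.mp ht)).ne_zero
  have hinv : ContinuousAt Inv.inv (algebraMap K _ t - B) :=
    continuousAt_matrix_inv _ (by simpa [Ring.inverse_eq_inv'] using continuousAt_inv₀ hdet)
  have : resolvent B = fun s => (algebraMap K (Matrix n n K) s - B)⁻¹ := by
    funext s; rw [resolvent, nonsing_inv_eq_ringInverse]
  rw [this]
  refine hinv.comp (f := fun s => algebraMap K (Matrix n n K) s - B) ?_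
  simp only [algebraMap_eq_diagonal]
  fun_prop

section Ordered
variable {K : Type*} [Field K] [LinearOrder K] [IsStrictOrderedRing K] {B : Matrix n n K}

theorem resolvent_nonneg_of_sum_row_lt (hB : ∀ i j, 0 ≤ B i j) {t : K}
    (ht : t ∈ resolventSet K B) (hrow : ∀ i, ∑ j, B i j < t) (i j : n) :
    0 ≤ resolvent B t i j := by
  have ht_pos : 0 < t := (Finset.sum_nonneg fun j _ => hB i j).trans_lt (hrow i)
  have hBR : B * resolvent B t = t • resolvent B t - 1 := by
    have h := Ring.mul_inverse_cancel _ (spectrum.mem_resolventSet_iff.mp ht)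
    rw [sub_mul, Algebra.algebraMap_eq_smul_one, smul_one_mul] at h
    rw [resolvent, Algebra.algebraMap_eq_smul_one]
    exact eq_sub_of_add_eq (sub_eq_iff_eq_add'.mp h).symm
  refine nonneg_of_mul_le_self (X := t⁻¹ • B) (fun k l => ?_) (fun k => ?_) (fun k l => ?_) i j
  · exact mul_nonneg (inv_nonneg.mpr ht_pos.le) (hB k l)
  · simpa [← Finset.mul_sum, inv_mul_lt_iff₀ ht_pos] using hrow k
  · rw [smul_mul_assoc, hBR, smul_sub, smul_smul, inv_mul_cancel₀ ht_pos.ne', one_smul]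
    simp only [sub_apply, smul_apply, smul_eq_mul, sub_le_self_iff]
    exact mul_nonneg (inv_nonneg.mpr ht_pos.le) (by rw [one_apply]; split_ifs <;> norm_num)

theorem exists_sum_row_lt_of_resolvent_nonneg [Nonempty n] {c : K} (hc : c ∈ resolventSet K B)
    (hR : ∀ i j, 0 ≤ resolvent B c i j) : ∃ i, ∑ j, B i j < c := by
  by_contra! hrow
  obtain ⟨i⟩ := ‹Nonempty n›
  have hone : resolvent B c *ᵥ ((algebraMap K _ c - B) *ᵥ fun _ => 1) = fun _ => 1 := by
    rw [mulVec_mulVec, resolvent, Ring.inverse_mul_cancel _ (spectrum.mem_resolventSet_iff.mp hc),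
      one_mulVec]
  have hone_i := congrFun hone i
  have hle : (resolvent B c *ᵥ ((algebraMap K _ c - B) *ᵥ fun _ => 1)) i ≤ 0 := by
    refine Finset.sum_nonpos fun j _ => mul_nonpos_of_nonneg_of_nonpos (hR i j) ?_
    rw [sub_mulVec, Algebra.algebraMap_eq_smul_one, smul_mulVec, one_mulVec]
    simpa [mulVec, dotProduct] using hrow j
  linarith
end Ordered

open Filter Topology

theorem eventually_resolvent_nonneg {B : Matrix n n ℝ} {x : ℝ} (hx : x ∈ resolventSet ℝ B)
    (hRx : ∀ i j, 0 ≤ resolvent B x i j) :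
    ∀ᶠ s in 𝓝[<] x, s ∈ resolventSet ℝ B → ∀ i j, 0 ≤ resolvent B s i j := by
  have hrow : ∀ᶠ s in 𝓝 x, ∀ i, (x - s) * ∑ j, resolvent B x i j < 1 :=
    eventually_all.mpr fun i =>
      ContinuousAt.eventually_lt (by fun_prop) continuousAt_const (by simp)
  filter_upwards [nhdsWithin_le_nhds hrow, self_mem_nhdsWithin] with s hs_row (hsx : s < x) hs
  refine nonneg_of_mul_le_self (X := (x - s) • resolvent B x) (fun k l => ?_) (fun k => ?_)
    (fun k l => ?_)
  · exact mul_nonneg (sub_nonneg.mpr hsx.le) (hRx k l)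
  · simpa [Finset.mul_sum] using hs_row k
  · rw [smul_mul_assoc, ← spectrum.resolvent_sub_resolvent_eq_smul_mul hx hs]
    simpa using hRx k l

theorem exists_mem_spectrum_ge_of_le_sum_row [Nonempty n] {B : Matrix n n ℝ}
    (hB : ∀ i j, 0 ≤ B i j) {c : ℝ} (hc : ∀ i, c ≤ ∑ j, B i j) : ∃ t ∈ spectrum ℝ B, c ≤ t := by
  by_contra! hspec
  have hres : ∀ t, c ≤ t → t ∈ resolventSet ℝ B := fun t ht =>
    not_not.mp fun hmem => (hspec t hmem).not_ge ht
  set S : Set ℝ := {t | ∀ i j, 0 ≤ resolvent B t i j}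
  set T := ∑ i, ∑ j, B i j + 1
  have hrow_lt : ∀ i, ∑ j, B i j < T := fun i => by
    have := Finset.single_le_sum (f := fun k => ∑ j, B k j)
      (fun k _ => Finset.sum_nonneg fun j _ => hB k j) (Finset.mem_univ i)
    linarith
  have hcT : c ≤ T := (hc (Classical.arbitrary n)).trans (hrow_lt _).le
  have hT : T ∈ S := resolvent_nonneg_of_sum_row_lt hB (hres T hcT) hrow_lt
  have hclosed : IsClosed (S ∩ Set.Icc c T) := by
    have hcont : ContinuousOn (resolvent B) (Set.Icc c T) := fun t ht =>
      (continuousAt_resolvent (hres t ht.1)).continuousWithinAt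
    rw [Set.inter_comm]
    refine hcont.preimage_isClosed_of_isClosed isClosed_Icc (t := {M | ∀ i j, 0 ≤ M i j}) ?_
    simp only [Set.ofPred_forall]
    exact isClosed_iInter fun i => isClosed_iInter fun j =>
      isClosed_le continuous_const ((continuous_apply j).comp (continuous_apply i))
  have hstep : ∀ x ∈ S ∩ Set.Ioc c T, ∀ y ∈ Set.Iio x, (S ∩ Set.Ico y x).Nonempty := by
    rintro x ⟨hxS, hcx, -⟩ y hyx
    obtain ⟨s, hs, hs_mem⟩ := ((eventually_resolvent_nonneg (hres x hcx.le) hxS).and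
      (Ico_mem_nhdsLT (max_lt hyx hcx))).exists
    exact ⟨s, hs (hres s (le_of_max_le_right hs_mem.1)), le_of_max_le_left hs_mem.1, hs_mem.2⟩
  obtain ⟨i, hi⟩ := exists_sum_row_lt_of_resolvent_nonneg (hres c le_rfl)
    (hclosed.Icc_subset_of_forall_exists_lt hT hstep ⟨le_rfl, hcT⟩)
  exact (hc i).not_gt hi

end Matrix

open Matrix

/-- For a nonnegative square real matrix, every complex eigenvalue has modulus at most the
maximal column sum, and there is a real eigenvalue at least as large as the minimal column
sum; i.e. the spectral radius lies between the minimal and maximal column sums. -/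
theorem spectral_radius_between_column_sums
    (m : ℕ) (hm : 0 < m)
    (A : Matrix (Fin m) (Fin m) ℝ)
    (hA_nonneg : ∀ i j, 0 ≤ A i j) :
    (∀ lam : ℂ, lam ∈ spectrum ℂ (A.map (algebraMap ℝ ℂ)) →
      ‖lam‖ ≤
        Finset.univ.sup' (Finset.univ_nonempty_iff.mpr ⟨⟨0, hm⟩⟩)
          (fun j => ∑ i, A i j)) ∧
    (∃ lam : ℝ, lam ∈ spectrum ℝ A ∧
      Finset.univ.inf' (Finset.univ_nonempty_iff.mpr ⟨⟨0, hm⟩⟩)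
        (fun j => ∑ i, A i j) ≤ lam) := by
  have : Nonempty (Fin m) := ⟨⟨0, hm⟩⟩
  refine ⟨fun lam hlam => ?_, ?_⟩
  · rw [← spectrum_transpose] at hlam
    obtain ⟨k, hk⟩ := exists_norm_le_sum_norm_row_of_mem_spectrum hlam
    calc ‖lam‖ ≤ ∑ i, ‖(A.map (algebraMap ℝ ℂ))ᵀ k i‖ := hk
      _ = ∑ i, A i k := by simp [Complex.norm_real, abs_of_nonneg (hA_nonneg _ k)]
      _ ≤ _ := Finset.le_sup' (fun j => ∑ i, A i j) (Finset.mem_univ k)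
  · obtain ⟨lam, hlam, hle⟩ := exists_mem_spectrum_ge_of_le_sum_row
      (B := Aᵀ) (fun i j => hA_nonneg j i)
      (c := Finset.univ.inf' (Finset.univ_nonempty_iff.mpr ⟨⟨0, hm⟩⟩) fun j => ∑ i, A i j)
      fun j => Finset.inf'_le _ (Finset.mem_univ j)
    exact ⟨lam, spectrum_transpose A ▸ hlam, hle⟩
end

section
/- Let M be an m×m column-stochastic real matrix which is primitive. Then: (i) 1 is an eigenvalue of M; (ii) there exists an eigenvector v₁ of M for the eigenvalue 1 all of whose components are strictly positive and sum to 1; (iii) the eigenspace of M for the eigenvalue 1 is one-dimensional; and (iv) every complex eigenvalue λ ≠ 1 of M satisfies |λ| < 1. -/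
/-!
Column sums equal to one say that `M` preserves `∑ i, v i`, and nonnegativity gives
`‖(M z) i‖ ≤ (M |z|) i`. Summing over `i`, every eigenvalue has modulus at most one, and for an
eigenvalue of modulus one the vector `|z|` is itself fixed by `M`.

Since `Mᵀ` fixes the all-ones vector, `M` has a nonzero real fixed vector `v`. A nonzero nonnegative
vector fixed by the positive matrix `M ^ k` has no zero entry; applied to `|v|` this gives the
positive eigenvector, and applied to `|w - t v|`, for a fixed `w` and `t` chosen to kill one entry,
it gives `w = t v`.

If `M z = μ z` with `|μ| = 1`, then `M ^ k z = μ ^ k z` and `M ^ k |z| = |z|`, so in every row of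
`M ^ k` the triangle inequality is an equality with positive weights. Hence `z = c |z|` for a
constant `c`, and `M |z| = |z|` forces `μ = 1`.
-/

open Matrix

open ComplexConjugate

theorem RCLike.exists_eq_mul_norm_of_norm_sum_eq {𝕜 ι : Type*} [RCLike 𝕜] [Fintype ι]
    {w : ι → 𝕜} (h : ‖∑ i, w i‖ = ∑ i, ‖w i‖) : ∃ c : 𝕜, ∀ i, w i = c * ‖w i‖ := by
  set s := ∑ i, w i
  by_cases hs : s = 0
  · refine ⟨0, fun i => ?_⟩
    rw [hs, norm_zero, eq_comm, Finset.sum_eq_zero_iff_of_nonneg fun i _ => norm_nonneg _] at h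
    simpa using h i (Finset.mem_univ i)
  -- after rotating by `conj s` the terms have real parts summing to the sum of their norms
  have hle : ∀ i ∈ Finset.univ, re (conj s * w i) ≤ ‖conj s * w i‖ := fun i _ => re_le_norm _
  have hsum : ∑ i, re (conj s * w i) = ∑ i, ‖conj s * w i‖ := by
    simp only [← map_sum, ← Finset.mul_sum, norm_mul, norm_conj]
    change re (conj s * s) = _
    rw [conj_mul, ← h]
    norm_cast
    ring
  have hreal : ∀ i, conj s * w i = ‖s‖ * ‖w i‖ := by
    intro i
    set x := conj s * w i
    have hre : re x = ‖x‖ := (Finset.sum_eq_sum_iff_of_le hle).mp hsum i (Finset.mem_univ i)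
    have him : im x = 0 := by
      have := norm_sq_eq_def (z := x)
      rw [← hre] at this
      nlinarith
    rw [← re_add_im x, him, hre, norm_mul, norm_conj]
    push_cast
    ring
  have hs' : (‖s‖ : 𝕜) ≠ 0 := ofReal_ne_zero.mpr (norm_ne_zero_iff.mpr hs)
  refine ⟨s / ‖s‖, fun i => ?_⟩
  have := congrArg (s * ·) (hreal i)
  simp only [← mul_assoc, mul_conj] at this
  rw [div_mul_eq_mul_div, eq_div_iff hs']
  refine mul_right_cancel₀ hs' ?_
  linear_combination this

namespace Matrix

variable {n : Type*} [Fintype n]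

theorem mem_spectrum_iff_exists_mulVec_eq_smul {K : Type*} [Field K] [DecidableEq n]
    {A : Matrix n n K} {μ : K} : μ ∈ spectrum K A ↔ ∃ v ≠ 0, A *ᵥ v = μ • v := by
  rw [← spectrum_toLin', ← Module.End.hasEigenvalue_iff_mem_spectrum,
    Module.End.hasEigenvalue_iff, Submodule.ne_bot_iff]
  simp only [Module.End.mem_eigenspace_iff, toLin'_apply]
  tauto

theorem pow_mulVec_eq_pow_smul {R : Type*} [CommSemiring R] [DecidableEq n] {A : Matrix n n R}
    {v : n → R} {μ : R} (h : A *ᵥ v = μ • v) (k : ℕ) : (A ^ k) *ᵥ v = μ ^ k • v := by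
  induction k with
  | zero => simp
  | succ k ih => rw [pow_succ, ← mulVec_mulVec, h, mulVec_smul, ih, smul_smul, pow_succ']

theorem pow_mulVec_eq_self {R : Type*} [CommSemiring R] [DecidableEq n] {A : Matrix n n R}
    {v : n → R} (h : A *ᵥ v = v) (k : ℕ) : (A ^ k) *ᵥ v = v := by
  simpa using pow_mulVec_eq_pow_smul (A := A) (μ := 1) (by rwa [one_smul]) k

theorem sum_mulVec_of_sum_col_eq_one {R : Type*} [CommSemiring R] {A : Matrix n n R}
    (hA : ∀ j, ∑ i, A i j = 1) (v : n → R) : ∑ i, (A *ᵥ v) i = ∑ i, v i := by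
  simp only [mulVec, dotProduct]
  rw [Finset.sum_comm]
  simp_rw [← Finset.sum_mul, hA, one_mul]

theorem one_mem_spectrum_of_sum_col_eq_one {K : Type*} [Field K] [DecidableEq n] [Nonempty n]
    {A : Matrix n n K} (hA : ∀ j, ∑ i, A i j = 1) : (1 : K) ∈ spectrum K A := by
  rw [mem_spectrum_iff_isRoot_charpoly, ← charpoly_transpose, ← mem_spectrum_iff_isRoot_charpoly,
    mem_spectrum_iff_exists_mulVec_eq_smul]
  refine ⟨fun _ => 1, Function.ne_iff.mpr ⟨Classical.arbitrary n, one_ne_zero⟩, ?_⟩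
  ext j
  simp [mulVec, dotProduct, hA]

theorem pos_of_mulVec_eq_self {A : Matrix n n ℝ} (hA : ∀ i j, 0 < A i j) {u : n → ℝ}
    (hu : A *ᵥ u = u) (hu_nonneg : ∀ i, 0 ≤ u i) (hu_ne : u ≠ 0) (i : n) : 0 < u i := by
  obtain ⟨j, hj⟩ := Function.ne_iff.mp hu_ne
  rw [← hu]
  exact Finset.sum_pos' (fun k _ => mul_nonneg (hA i k).le (hu_nonneg k))
    ⟨j, Finset.mem_univ j, mul_pos (hA i j) ((hu_nonneg j).lt_of_ne' hj)⟩

section Eigenvector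

variable {𝕜 : Type*} [RCLike 𝕜] {z : n → 𝕜} {μ : 𝕜} {M : Matrix n n ℝ}

theorem norm_map_mulVec_le (hM : ∀ i j, 0 ≤ M i j) (z : n → 𝕜) (i : n) :
    ‖(M.map (algebraMap ℝ 𝕜) *ᵥ z) i‖ ≤ (M *ᵥ fun j => ‖z j‖) i := by
  simp only [mulVec, dotProduct, map_apply]
  refine (norm_sum_le _ _).trans_eq (Finset.sum_congr rfl fun j _ => ?_)
  rw [norm_mul, RCLike.norm_ofReal, abs_of_nonneg (hM i j)]

theorem norm_smul_le_mulVec_norm (hM : ∀ i j, 0 ≤ M i j)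
    (h : M.map (algebraMap ℝ 𝕜) *ᵥ z = μ • z) (i : n) :
    ‖μ‖ * ‖z i‖ ≤ (M *ᵥ fun j => ‖z j‖) i := by
  simpa [h, norm_mul] using norm_map_mulVec_le hM z i

theorem norm_le_one_of_map_mulVec_eq_smul (hM_nonneg : ∀ i j, 0 ≤ M i j)
    (hM_cols : ∀ j, ∑ i, M i j = 1) (hz : z ≠ 0) (h : M.map (algebraMap ℝ 𝕜) *ᵥ z = μ • z) :
    ‖μ‖ ≤ 1 := by
  obtain ⟨j, hj⟩ := Function.ne_iff.mp hz
  have hsum_pos : 0 < ∑ i, ‖z i‖ :=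
    Finset.sum_pos' (fun i _ => norm_nonneg _) ⟨j, Finset.mem_univ j, norm_pos_iff.mpr hj⟩
  have : ‖μ‖ * ∑ i, ‖z i‖ ≤ 1 * ∑ i, ‖z i‖ :=
    calc ‖μ‖ * ∑ i, ‖z i‖ = ∑ i, ‖μ‖ * ‖z i‖ := Finset.mul_sum _ _ _
      _ ≤ ∑ i, (M *ᵥ fun j => ‖z j‖) i :=
        Finset.sum_le_sum fun i _ => norm_smul_le_mulVec_norm hM_nonneg h i
      _ = 1 * ∑ i, ‖z i‖ := by rw [sum_mulVec_of_sum_col_eq_one hM_cols, one_mul]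
  exact le_of_mul_le_mul_right this hsum_pos

theorem mulVec_norm_eq_of_map_mulVec_eq_smul (hM_nonneg : ∀ i j, 0 ≤ M i j)
    (hM_cols : ∀ j, ∑ i, M i j = 1) (h : M.map (algebraMap ℝ 𝕜) *ᵥ z = μ • z) (hμ : ‖μ‖ = 1) :
    (M *ᵥ fun j => ‖z j‖) = fun j => ‖z j‖ := by
  have hle : ∀ i ∈ Finset.univ, ‖z i‖ ≤ (M *ᵥ fun j => ‖z j‖) i := fun i _ => by
    simpa [hμ] using norm_smul_le_mulVec_norm hM_nonneg h i
  funext i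
  exact ((Finset.sum_eq_sum_iff_of_le hle).mp
    (sum_mulVec_of_sum_col_eq_one hM_cols _).symm i (Finset.mem_univ i)).symm

theorem mulVec_abs_eq_self (hM_nonneg : ∀ i j, 0 ≤ M i j) (hM_cols : ∀ j, ∑ i, M i j = 1)
    {v : n → ℝ} (hv : M *ᵥ v = v) : (M *ᵥ fun j => |v j|) = fun j => |v j| :=
  mulVec_norm_eq_of_map_mulVec_eq_smul (𝕜 := ℝ) hM_nonneg hM_cols (by simpa using hv) norm_one

theorem exists_eq_mul_norm_of_map_mulVec_eq_smul {A : Matrix n n ℝ} (hA : ∀ i j, 0 < A i j)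
    (h : A.map (algebraMap ℝ 𝕜) *ᵥ z = μ • z) (hμ : ‖μ‖ = 1)
    (hu : (A *ᵥ fun j => ‖z j‖) = fun j => ‖z j‖) : ∃ c : 𝕜, ∀ j, z j = c * ‖z j‖ := by
  cases isEmpty_or_nonempty n with
  | inl _ => exact ⟨0, isEmptyElim⟩
  | inr _ =>
  let i := Classical.arbitrary n
  have hrow : ‖∑ j, (A i j : 𝕜) * z j‖ = ∑ j, ‖(A i j : 𝕜) * z j‖ := by
    have hz := congrFun h i
    have hu := congrFun hu i
    simp only [mulVec, dotProduct, map_apply, Pi.smul_apply, smul_eq_mul] at hz hu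
    simp only [norm_mul, RCLike.norm_ofReal, abs_of_pos (hA i _), ← RCLike.algebraMap_eq_ofReal]
    rw [hz, norm_mul, hμ, one_mul, hu]
  obtain ⟨c, hc⟩ := RCLike.exists_eq_mul_norm_of_norm_sum_eq hrow
  refine ⟨c, fun j => ?_⟩
  have hcj := hc j
  rw [norm_mul, RCLike.norm_ofReal, abs_of_pos (hA i j)] at hcj
  push_cast at hcj
  exact mul_left_cancel₀ (RCLike.ofReal_ne_zero.mpr (hA i j).ne') (by linear_combination hcj)

end Eigenvector

section Primitive

variable [DecidableEq n] {M : Matrix n n ℝ}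

theorem eq_one_of_map_mulVec_eq_smul {𝕜 : Type*} [RCLike 𝕜] {z : n → 𝕜} {μ : 𝕜}
    (hM_nonneg : ∀ i j, 0 ≤ M i j) (hM_cols : ∀ j, ∑ i, M i j = 1) (hM_prim : Primitive M)
    (hz : z ≠ 0) (h : M.map (algebraMap ℝ 𝕜) *ᵥ z = μ • z) (hμ : ‖μ‖ = 1) : μ = 1 := by
  obtain ⟨k, -, hk⟩ := hM_prim
  have hu : (M *ᵥ fun j => ‖z j‖) = fun j => ‖z j‖ :=
    mulVec_norm_eq_of_map_mulVec_eq_smul hM_nonneg hM_cols h hμ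
  have hzk : (M ^ k).map (algebraMap ℝ 𝕜) *ᵥ z = μ ^ k • z := by
    rw [← RingHom.mapMatrix_apply, map_pow]
    exact pow_mulVec_eq_pow_smul h k
  obtain ⟨c, hc⟩ := exists_eq_mul_norm_of_map_mulVec_eq_smul hk hzk
    (by rw [norm_pow, hμ, one_pow]) (pow_mulVec_eq_self hu k)
  have hz_eq : z = c • (algebraMap ℝ 𝕜 ∘ fun j => ‖z j‖) := funext hc
  have hz_fixed : M.map (algebraMap ℝ 𝕜) *ᵥ z = z := by
    conv_lhs => rw [hz_eq, mulVec_smul]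
    conv_rhs => rw [hz_eq]
    congr 1
    funext i
    rw [← RingHom.map_mulVec, hu]
    rfl
  rw [h] at hz_fixed
  exact smul_left_injective 𝕜 hz (hz_fixed.trans (one_smul 𝕜 z).symm)

theorem apply_ne_zero_of_mulVec_eq_self (hM_nonneg : ∀ i j, 0 ≤ M i j)
    (hM_cols : ∀ j, ∑ i, M i j = 1) (hM_prim : Primitive M) {v : n → ℝ} (hv : M *ᵥ v = v)
    (hv_ne : v ≠ 0) (i : n) : v i ≠ 0 := by
  obtain ⟨k, -, hk⟩ := hM_prim
  have hu_ne : (fun j => |v j|) ≠ 0 := fun h0 =>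
    hv_ne (funext fun j => abs_eq_zero.mp (congrFun h0 j))
  exact abs_pos.mp <| pos_of_mulVec_eq_self hk
    (pow_mulVec_eq_self (mulVec_abs_eq_self hM_nonneg hM_cols hv) k) (fun _ => abs_nonneg _)
    hu_ne i

theorem exists_pos_mulVec_eq_self [Nonempty n] (hM_nonneg : ∀ i j, 0 ≤ M i j)
    (hM_cols : ∀ j, ∑ i, M i j = 1) (hM_prim : Primitive M) :
    ∃ v : n → ℝ, M *ᵥ v = v ∧ (∀ i, 0 < v i) ∧ ∑ i, v i = 1 := by
  obtain ⟨v, hv_ne, hv⟩ :=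
    mem_spectrum_iff_exists_mulVec_eq_smul.mp (one_mem_spectrum_of_sum_col_eq_one hM_cols)
  rw [one_smul] at hv
  set u : n → ℝ := fun j => |v j|
  have hu : M *ᵥ u = u := mulVec_abs_eq_self hM_nonneg hM_cols hv
  have hu_pos : ∀ i, 0 < u i := fun i =>
    abs_pos.mpr (apply_ne_zero_of_mulVec_eq_self hM_nonneg hM_cols hM_prim hv hv_ne i)
  have hsum_pos : 0 < ∑ i, u i := Finset.sum_pos (fun i _ => hu_pos i) Finset.univ_nonempty
  refine ⟨(∑ i, u i)⁻¹ • u, by rw [mulVec_smul, hu], fun i => ?_, ?_⟩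
  · exact mul_pos (inv_pos.mpr hsum_pos) (hu_pos i)
  · simp only [Pi.smul_apply, smul_eq_mul, ← Finset.mul_sum]
    exact inv_mul_cancel₀ hsum_pos.ne'

theorem eigenspace_mulVecLin_one_eq_span [Nonempty n] (hM_nonneg : ∀ i j, 0 ≤ M i j)
    (hM_cols : ∀ j, ∑ i, M i j = 1) (hM_prim : Primitive M) {v : n → ℝ} (hv : M *ᵥ v = v)
    (hv_pos : ∀ i, 0 < v i) :
    Module.End.eigenspace (mulVecLin M) 1 = Submodule.span ℝ {v} := by
  refine le_antisymm (fun w hw => ?_) ?_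
  · rw [Module.End.mem_eigenspace_iff, one_smul, mulVecLin_apply] at hw
    let i₀ := Classical.arbitrary n
    set t := w i₀ / v i₀
    have hq : M *ᵥ (w - t • v) = w - t • v := by rw [mulVec_sub, mulVec_smul, hw, hv]
    have hq₀ : (w - t • v) i₀ = 0 := by simp [t, div_mul_cancel₀ _ (hv_pos i₀).ne']
    have hq_zero : w - t • v = 0 := by
      by_contra hq_ne
      exact apply_ne_zero_of_mulVec_eq_self hM_nonneg hM_cols hM_prim hq hq_ne i₀ hq₀
    exact Submodule.mem_span_singleton.mpr ⟨t, (sub_eq_zero.mp hq_zero).symm⟩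
  · rw [Submodule.span_singleton_le_iff_mem, Module.End.mem_eigenspace_iff, one_smul,
      mulVecLin_apply]
    exact hv

end Primitive

end Matrix

/-- **Perron–Frobenius for primitive column-stochastic matrices.**
(i) `1` is an eigenvalue; (ii) there is an eigenvector for `1` with strictly positive
components summing to one; (iii) the eigenspace for `1` is one-dimensional; (iv) every
other complex eigenvalue has modulus strictly less than one. -/
theorem perron_frobenius_column_stochastic
    (m : ℕ) (hm : 0 < m)
    (M : Matrix (Fin m) (Fin m) ℝ)
    (hM_nonneg : ∀ i j, 0 ≤ M i j)
    (hM_cols : ∀ j, ∑ i, M i j = 1)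
    (hM_prim : Primitive M) :
    (1 : ℝ) ∈ spectrum ℝ M ∧
    (∃ v₁ : Fin m → ℝ, M.mulVec v₁ = v₁ ∧ (∀ i, 0 < v₁ i) ∧ ∑ i, v₁ i = 1) ∧
    Module.finrank ℝ (Module.End.eigenspace (Matrix.mulVecLin M) 1) = 1 ∧
    (∀ lam : ℂ, lam ∈ spectrum ℂ (M.map (algebraMap ℝ ℂ)) → lam ≠ 1 →
      ‖lam‖ < 1) := by
  have : Nonempty (Fin m) := ⟨⟨0, hm⟩⟩
  obtain ⟨v, hv, hv_pos, hv_sum⟩ := exists_pos_mulVec_eq_self hM_nonneg hM_cols hM_prim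
  refine ⟨one_mem_spectrum_of_sum_col_eq_one hM_cols, ⟨v, hv, hv_pos, hv_sum⟩, ?_, ?_⟩
  · rw [eigenspace_mulVecLin_one_eq_span hM_nonneg hM_cols hM_prim hv hv_pos]
    exact finrank_span_singleton fun h0 => (hv_pos ⟨0, hm⟩).ne' (congrFun h0 _)
  · intro lam hlam hlam_ne
    obtain ⟨z, hz, hz_eig⟩ := mem_spectrum_iff_exists_mulVec_eq_smul.mp hlam
    exact (norm_le_one_of_map_mulVec_eq_smul hM_nonneg hM_cols hz hz_eig).lt_of_ne
      (mt (eq_one_of_map_mulVec_eq_smul hM_nonneg hM_cols hM_prim hz hz_eig) hlam_ne)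
end

section
/- Let M be an m×m column-stochastic real matrix which is primitive, and let v₁ be the unique eigenvector of M for the eigenvalue 1 with strictly positive components summing to 1. Then for every w ∈ ℝ^m whose components sum to 1, the sequence M^k w converges to v₁ as k → ∞. -/
open Matrix Filter

section Helpers

variable {m : ℕ}

/-- ℓ¹ "norm". -/
noncomputable def l1 {m : ℕ} (u : Fin m → ℝ) : ℝ := ∑ i, |u i|

lemma l1_nonneg (u : Fin m → ℝ) : 0 ≤ l1 u :=
  Finset.sum_nonneg fun _ _ => abs_nonneg _

lemma abs_le_l1 (u : Fin m → ℝ) (i : Fin m) : |u i| ≤ l1 u :=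
  Finset.single_le_sum (fun j _ => abs_nonneg (u j)) (Finset.mem_univ i)

/-- column-stochastic matrices preserve coordinate sums. -/
lemma sum_mulVec (N : Matrix (Fin m) (Fin m) ℝ) (hcol : ∀ j, ∑ i, N i j = 1)
    (u : Fin m → ℝ) : ∑ i, N.mulVec u i = ∑ j, u j := by
  simp only [Matrix.mulVec, dotProduct]
  rw [Finset.sum_comm]
  simp [← Finset.sum_mul, hcol]

lemma l1_mulVec_le (N : Matrix (Fin m) (Fin m) ℝ) (hN : ∀ i j, 0 ≤ N i j)
    (hcol : ∀ j, ∑ i, N i j = 1) (u : Fin m → ℝ) :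
    l1 (N.mulVec u) ≤ l1 u := by
  unfold l1
  have step1 : ∑ i, |N.mulVec u i| ≤ ∑ i, ∑ j, N i j * |u j| := by
    refine Finset.sum_le_sum fun i _ => ?_
    show |∑ j, N i j * u j| ≤ _
    refine (Finset.abs_sum_le_sum_abs _ _).trans ?_
    refine le_of_eq (Finset.sum_congr rfl fun j _ => ?_)
    rw [abs_mul, abs_of_nonneg (hN i j)]
  refine step1.trans (le_of_eq ?_)
  rw [Finset.sum_comm]
  refine Finset.sum_congr rfl fun j _ => ?_
  rw [← Finset.sum_mul, hcol j, one_mul]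

lemma l1_pow_le (M : Matrix (Fin m) (Fin m) ℝ) (hN : ∀ i j, 0 ≤ M i j)
    (hcol : ∀ j, ∑ i, M i j = 1) (k : ℕ) :
    ∀ u : Fin m → ℝ, l1 ((M ^ k).mulVec u) ≤ l1 u := by
  induction k with
  | zero => intro u; simp
  | succ k ih =>
    intro u
    rw [pow_succ, ← Matrix.mulVec_mulVec]
    exact (ih _).trans (l1_mulVec_le M hN hcol u)

lemma l1_contraction (A : Matrix (Fin m) (Fin m) ℝ) (δ : ℝ)
    (hA : ∀ i j, δ ≤ A i j) (hcol : ∀ j, ∑ i, A i j = 1)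
    (u : Fin m → ℝ) (hu : ∑ j, u j = 0) :
    l1 (A.mulVec u) ≤ (1 - m * δ) * l1 u := by
  unfold l1
  have key : ∀ i, A.mulVec u i = ∑ j, (A i j - δ) * u j := by
    intro i
    simp only [Matrix.mulVec, dotProduct, sub_mul]
    rw [Finset.sum_sub_distrib, ← Finset.mul_sum, hu, mul_zero, sub_zero]
  have step1 : ∑ i, |A.mulVec u i| ≤ ∑ i, ∑ j, (A i j - δ) * |u j| := by
    refine Finset.sum_le_sum fun i _ => ?_
    rw [key i]
    refine (Finset.abs_sum_le_sum_abs _ _).trans ?_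
    refine le_of_eq (Finset.sum_congr rfl fun j _ => ?_)
    rw [abs_mul, abs_of_nonneg (sub_nonneg.mpr (hA i j))]
  refine step1.trans (le_of_eq ?_)
  rw [Finset.sum_comm, Finset.mul_sum]
  refine Finset.sum_congr rfl fun j _ => ?_
  rw [← Finset.sum_mul, Finset.sum_sub_distrib, hcol j, Finset.sum_const,
    Finset.card_univ, Fintype.card_fin, nsmul_eq_mul]

lemma pow_nonneg_entries (M : Matrix (Fin m) (Fin m) ℝ) (h : ∀ i j, 0 ≤ M i j) (k : ℕ) :
    ∀ i j, 0 ≤ (M ^ k) i j := by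
  induction k with
  | zero =>
    intro i j
    simp only [pow_zero, Matrix.one_apply]
    split <;> norm_num
  | succ k ih =>
    intro i j
    rw [pow_succ, Matrix.mul_apply]
    exact Finset.sum_nonneg fun l _ => mul_nonneg (ih i l) (h l j)

lemma pow_cols (M : Matrix (Fin m) (Fin m) ℝ) (h : ∀ j, ∑ i, M i j = 1) (k : ℕ) :
    ∀ j, ∑ i, (M ^ k) i j = 1 := by
  induction k with
  | zero => intro j; simp [Matrix.one_apply]
  | succ k ih =>
    intro j
    simp only [pow_succ, Matrix.mul_apply]
    rw [Finset.sum_comm]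
    simp only [← Finset.sum_mul, ih]
    simp [h]

end Helpers

/-- For a primitive column-stochastic matrix `M` with Perron eigenvector `v₁` (positive
components summing to one), the iterates `M^k w` converge to `v₁` for every real vector `w`
whose components sum to one. -/
theorem iterates_tendsto_perron_vector
    (m : ℕ) (M : Matrix (Fin m) (Fin m) ℝ)
    (hM_nonneg : ∀ i j, 0 ≤ M i j)
    (hM_cols : ∀ j, ∑ i, M i j = 1)
    (hM_prim : Primitive M)
    (v₁ : Fin m → ℝ)
    (hv₁_eig : M.mulVec v₁ = v₁)
    (hv₁_pos : ∀ i, 0 < v₁ i)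
    (hv₁_sum : ∑ i, v₁ i = 1)
    (w : Fin m → ℝ) (hw_sum : ∑ i, w i = 1) :
    Filter.Tendsto (fun k => (M ^ k).mulVec w) Filter.atTop (nhds v₁) := by
  -- m > 0
  have hm : 0 < m := by
    rcases Nat.eq_zero_or_pos m with h | h
    · exfalso; subst h; simp at hw_sum
    · exact h
  obtain ⟨n, hn1, hpos⟩ := hM_prim
  have hn0 : 0 < n := hn1
  -- minimal entry δ of M^n
  have : Nonempty (Fin m × Fin m) := ⟨⟨⟨0, hm⟩, ⟨0, hm⟩⟩⟩
  obtain ⟨p, hp⟩ := Finite.exists_min (fun q : Fin m × Fin m => (M ^ n) q.1 q.2)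
  set δ : ℝ := (M ^ n) p.1 p.2 with hδdef
  have hδpos : 0 < δ := hpos p.1 p.2
  have hδle : ∀ i j, δ ≤ (M ^ n) i j := fun i j => hp (i, j)
  set c : ℝ := 1 - m * δ with hcdef
  have hMncols := pow_cols M hM_cols n
  have hc0 : 0 ≤ c := by
    have hmd : (m : ℝ) * δ ≤ 1 := by
      have j0 : Fin m := ⟨0, hm⟩
      have h1 : (m : ℝ) * δ = ∑ _i : Fin m, δ := by
        rw [Finset.sum_const, Finset.card_univ, Fintype.card_fin, nsmul_eq_mul]
      rw [h1, ← hMncols j0]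
      exact Finset.sum_le_sum fun i _ => hδle i j0
    simp only [hcdef]; linarith
  have hc1 : c < 1 := by
    have : 0 < (m : ℝ) * δ := mul_pos (by exact_mod_cast hm) hδpos
    simp only [hcdef]; linarith
  -- M^k v₁ = v₁
  have heig : ∀ k, (M ^ k).mulVec v₁ = v₁ := by
    intro k
    induction k with
    | zero => simp
    | succ k ih => rw [pow_succ, ← Matrix.mulVec_mulVec, hv₁_eig, ih]
  -- key contraction estimate
  have key : ∀ k (u : Fin m → ℝ), (∑ j, u j) = 0 →
      l1 ((M ^ k).mulVec u) ≤ c ^ (k / n) * l1 u := by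
    intro k
    induction k using Nat.strong_induction_on with
    | _ k ih =>
      intro u hu
      by_cases hk : k < n
      · rw [Nat.div_eq_of_lt hk, pow_zero, one_mul]
        exact l1_pow_le M hM_nonneg hM_cols k u
      · push_neg at hk
        have hkn : k - n < k := Nat.sub_lt (lt_of_lt_of_le hn0 hk) hn0
        have hsplit : M ^ k = M ^ (k - n) * M ^ n := by
          rw [← pow_add, Nat.sub_add_cancel hk]
        have hsum' : (∑ j, (M ^ n).mulVec u j) = 0 := by
          rw [sum_mulVec _ hMncols, hu]
        have h1 : l1 ((M ^ k).mulVec u)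
            ≤ c ^ ((k - n) / n) * l1 ((M ^ n).mulVec u) := by
          rw [hsplit, ← Matrix.mulVec_mulVec]
          exact ih (k - n) hkn _ hsum'
        have h2 : l1 ((M ^ n).mulVec u) ≤ c * l1 u :=
          l1_contraction (M ^ n) δ hδle hMncols u hu
        have h3 : c ^ ((k - n) / n) * l1 ((M ^ n).mulVec u)
            ≤ c ^ ((k - n) / n) * (c * l1 u) :=
          mul_le_mul_of_nonneg_left h2 (pow_nonneg hc0 _)
        have hdiv : k / n = (k - n) / n + 1 := by
          conv_lhs => rw [← Nat.sub_add_cancel hk]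
          rw [Nat.add_div_right _ hn0]
        rw [hdiv, pow_succ]
        calc l1 ((M ^ k).mulVec u) ≤ c ^ ((k - n) / n) * (c * l1 u) := h1.trans h3
          _ = c ^ ((k - n) / n) * c * l1 u := by ring
  -- put things together
  set u : Fin m → ℝ := w - v₁ with hudef
  have husum : (∑ j, u j) = 0 := by
    simp [hudef, Finset.sum_sub_distrib, hw_sum, hv₁_sum]
  have hdecomp : ∀ k, (M ^ k).mulVec w = (M ^ k).mulVec u + v₁ := by
    intro k
    rw [hudef, Matrix.mulVec_sub, heig k]
    ext i
    simp
  -- c^(k/n) * l1 u → 0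
  have hdivtop : Tendsto (fun k : ℕ => k / n) atTop atTop := by
    refine tendsto_atTop_atTop.mpr fun b => ⟨b * n, fun k hk => ?_⟩
    exact (Nat.le_div_iff_mul_le hn0).mpr hk
  have hcpow : Tendsto (fun k : ℕ => c ^ (k / n) * l1 u) atTop (nhds 0) := by
    have h0 : Tendsto (fun j : ℕ => c ^ j) atTop (nhds 0) :=
      tendsto_pow_atTop_nhds_zero_of_lt_one hc0 hc1
    have := (h0.comp hdivtop).mul_const (l1 u)
    simpa using this
  rw [tendsto_pi_nhds]
  intro i
  have hcoord : Tendsto (fun k => ((M ^ k).mulVec u) i) atTop (nhds 0) := by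
    refine squeeze_zero_norm (fun k => ?_) hcpow
    calc ‖((M ^ k).mulVec u) i‖ = |((M ^ k).mulVec u) i| := rfl
      _ ≤ l1 ((M ^ k).mulVec u) := abs_le_l1 _ i
      _ ≤ c ^ (k / n) * l1 u := key k u husum
  have : Tendsto (fun k => ((M ^ k).mulVec u) i + v₁ i) atTop (nhds (0 + v₁ i)) :=
    hcoord.add tendsto_const_nhds
  rw [zero_add] at this
  refine this.congr fun k => ?_
  rw [hdecomp k]
  simp
end
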